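/- arXiv:math-ph/0206046 — 3 statements merged into one kernel-verified Lean document; each statement's English description precedes it below -/
import Mathlib

section
/- Let H = (p₁² + p₂²)/2 + a·x (a : ℝ) on phase space ℝ⁴. Then X = p₂ and Y = p₁² /2 + a x (equivalently H - p₂²/2) and Z = p₁ p₂ + a y all Poisson-commute with H, and H, X, Z are functionally independent (their gradients are linearly independent at a generic point). -/
/-- Canonical Poisson bracket on phase space ℝ⁴ with coordinates (x, y, p₁, p₂). -/
noncomputable def poissonBracket (F G : ℝ → ℝ → ℝ → ℝ → ℝ) (x y p q : ℝ) : ℝ :=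
    deriv (fun t => F t y p q) x * deriv (fun t => G x y t q) p
  + deriv (fun t => F x t p q) y * deriv (fun t => G x y p t) q
  - deriv (fun t => F x y t q) p * deriv (fun t => G t y p q) x
  - deriv (fun t => F x y p t) q * deriv (fun t => G x t p q) y

/-- Gradient of a phase-space function as a vector in ℝ⁴. -/
noncomputable def phaseGrad (F : ℝ → ℝ → ℝ → ℝ → ℝ) (x y p q : ℝ) : Fin 4 → ℝ :=
  ![deriv (fun t => F t y p q) x, deriv (fun t => F x t p q) y,
    deriv (fun t => F x y t q) p, deriv (fun t => F x y p t) q]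

/-! The Hamiltonian flow of `H` is `ẋ = p₁, ẏ = p₂, ṗ₁ = -a, ṗ₂ = 0`, so `-{H, G}` is the derivative
of `G` along this vector field. The gradients of `H` and `Z` carry `a` in their `x`- and `y`-slots
respectively, which makes the three gradients independent at every point once `a ≠ 0`. -/

section LinearPotential

variable (a : ℝ)

theorem poissonBracket_linearPotential (G : ℝ → ℝ → ℝ → ℝ → ℝ) (x y p q : ℝ) :
    poissonBracket (fun x _ p q => (p ^ 2 + q ^ 2) / 2 + a * x) G x y p q =
      a * deriv (fun t => G x y t q) p - p * deriv (fun t => G t y p q) x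
        - q * deriv (fun t => G x t p q) y := by
  simp [poissonBracket]

theorem phaseGrad_linearPotential (x y p q : ℝ) :
    phaseGrad (fun x _ p q => (p ^ 2 + q ^ 2) / 2 + a * x) x y p q = ![a, 0, p, q] := by
  simp [phaseGrad]

theorem phaseGrad_snd_momentum (x y p q : ℝ) :
    phaseGrad (fun _ _ _ q => q) x y p q = ![0, 0, 0, 1] := by
  simp [phaseGrad]

theorem phaseGrad_secondIntegral (x y p q : ℝ) :
    phaseGrad (fun _ y p q => p * q + a * y) x y p q = ![0, a, q, p] := by
  simp [phaseGrad]

end LinearPotential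

theorem linearIndependent_linearPotential_grads {a : ℝ} (ha : a ≠ 0) (p q : ℝ) :
    LinearIndependent ℝ ![![a, 0, p, q], ![0, 0, 0, 1], ![0, a, q, p]] := by
  rw [Fintype.linearIndependent_iff]
  intro c hc
  have hc0 : c 0 = 0 := by simpa [Fin.sum_univ_succ, ha] using congrFun hc 0
  have hc2 : c 2 = 0 := by simpa [Fin.sum_univ_succ, ha] using congrFun hc 1
  have hc1 : c 1 = 0 := by simpa [Fin.sum_univ_succ, hc0, hc2] using congrFun hc 3
  intro i
  fin_cases i <;> assumption

theorem linear_potential_superintegrable (a : ℝ) :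
    (∀ x y p q : ℝ,
      poissonBracket (fun x _ p q => (p ^ 2 + q ^ 2) / 2 + a * x)
        (fun _ _ _ q => q) x y p q = 0) ∧
    (∀ x y p q : ℝ,
      poissonBracket (fun x _ p q => (p ^ 2 + q ^ 2) / 2 + a * x)
        (fun x _ p _ => p ^ 2 / 2 + a * x) x y p q = 0) ∧
    (∀ x y p q : ℝ,
      poissonBracket (fun x _ p q => (p ^ 2 + q ^ 2) / 2 + a * x)
        (fun _ y p q => p * q + a * y) x y p q = 0) ∧
    (a ≠ 0 → ∃ x y p q : ℝ, LinearIndependent ℝ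
      ![phaseGrad (fun x _ p q => (p ^ 2 + q ^ 2) / 2 + a * x) x y p q,
        phaseGrad (fun _ _ _ q => q) x y p q,
        phaseGrad (fun _ y p q => p * q + a * y) x y p q]) := by
  refine ⟨fun x y p q => ?_, fun x y p q => ?_, fun x y p q => ?_, fun ha => ⟨0, 0, 0, 0, ?_⟩⟩
  · simp [poissonBracket_linearPotential]
  · simp [poissonBracket_linearPotential, mul_comm]
  · simp [poissonBracket_linearPotential, mul_comm]
  · rw [phaseGrad_linearPotential, phaseGrad_snd_momentum, phaseGrad_secondIntegral]
    exact linearIndependent_linearPotential_grads ha 0 0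
end

section
/- Suppose V : ℝ² → ℝ is C¹ and g₁, g₂ : ℝ² → ℝ are C¹ and satisfy g₁ V_x + g₂ V_y = 0, (g₁)_x = 3f₁ V_x + f₂ V_y, (g₂)_y = f₃ V_x + 3f₄ V_y, and (g₁)_y + (g₂)_x = 2(f₂ V_x + f₃ V_y), where f₁,...,f₄ are the cubic polynomial coefficient functions determined by constants A_{ijk}. Then the phase-space function X = Σ_{i+j+k=3} A_{ijk} p₁^i p₂^j L^k + g₁ p₁ + g₂ p₂ (with L = xp₂ - yp₁) Poisson-commutes with H = (p₁² + p₂²)/2 + V(x,y). -/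
section PartialDerivatives

variable {𝕜 E : Type*} [NontriviallyNormedField 𝕜] [NormedAddCommGroup E] [NormedSpace 𝕜 E]
  {F : 𝕜 → 𝕜 → E} {x y : 𝕜}

theorem DifferentiableAt.hasDerivAt_partial_fst
    (h : DifferentiableAt 𝕜 (fun z : 𝕜 × 𝕜 => F z.1 z.2) (x, y)) :
    HasDerivAt (fun t => F t y) (deriv (fun t => F t y) x) x :=
  DifferentiableAt.hasDerivAt (h.comp x (differentiableAt_id.prodMk (differentiableAt_const y)) :
    DifferentiableAt 𝕜 ((fun z : 𝕜 × 𝕜 => F z.1 z.2) ∘ fun t => (t, y)) x)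

theorem DifferentiableAt.hasDerivAt_partial_snd
    (h : DifferentiableAt 𝕜 (fun z : 𝕜 × 𝕜 => F z.1 z.2) (x, y)) :
    HasDerivAt (fun t => F x t) (deriv (fun t => F x t) y) y :=
  DifferentiableAt.hasDerivAt (h.comp y ((differentiableAt_const x).prodMk differentiableAt_id) :
    DifferentiableAt 𝕜 ((fun z : 𝕜 × 𝕜 => F z.1 z.2) ∘ fun t => (x, t)) y)

end PartialDerivatives

theorem poissonBracket_kinetic_add_potential (V : ℝ → ℝ → ℝ) (G : ℝ → ℝ → ℝ → ℝ → ℝ)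
    (x y p q : ℝ) :
    poissonBracket (fun x y p q => (p ^ 2 + q ^ 2) / 2 + V x y) G x y p q
      = deriv (fun t => V t y) x * deriv (fun t => G x y t q) p
        + deriv (fun t => V x t) y * deriv (fun t => G x y p t) q
        - p * deriv (fun t => G t y p q) x - q * deriv (fun t => G x t p q) y := by
  have hp : HasDerivAt (fun t : ℝ => (t ^ 2 + q ^ 2) / 2 + V x y) p p := by
    simpa using (((hasDerivAt_pow 2 p).add_const (q ^ 2)).div_const 2).add_const (V x y)
  have hq : HasDerivAt (fun t : ℝ => (p ^ 2 + t ^ 2) / 2 + V x y) q q := by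
    simpa using (((hasDerivAt_pow 2 q).const_add (p ^ 2)).div_const 2).add_const (V x y)
  simp only [poissonBracket, deriv_const_add, hp.deriv, hq.deriv]

theorem hasDerivAt_binaryCubic_fst (a b c d q p : ℝ) :
    HasDerivAt (fun t => a * t ^ 3 + b * t ^ 2 * q + c * t * q ^ 2 + d * q ^ 3)
      (3 * a * p ^ 2 + 2 * b * p * q + c * q ^ 2) p :=
  ((((((hasDerivAt_pow 3 p).const_mul a).add
    (((hasDerivAt_pow 2 p).const_mul b).mul_const q)).add
    (((hasDerivAt_id' p).const_mul c).mul_const (q ^ 2))).add_const (d * q ^ 3))).congr_deriv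
    (by ring)

theorem hasDerivAt_binaryCubic_snd (a b c d p q : ℝ) :
    HasDerivAt (fun t => a * p ^ 3 + b * p ^ 2 * t + c * p * t ^ 2 + d * t ^ 3)
      (b * p ^ 2 + 2 * c * p * q + 3 * d * q ^ 2) q :=
  (((((hasDerivAt_id' q).const_mul (b * p ^ 2)).const_add (a * p ^ 3)).add
    ((hasDerivAt_pow 2 q).const_mul (c * p))).add ((hasDerivAt_pow 3 q).const_mul d)).congr_deriv
    (by ring)

section AngularMomentum

variable {c : ℝ → ℝ} {x y p q : ℝ}

theorem hasDerivAt_comp_angularMomentum_fst (hc : DifferentiableAt ℝ c (x * q - y * p)) :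
    HasDerivAt (fun t => c (t * q - y * p)) (deriv c (x * q - y * p) * q) x :=
  hc.hasDerivAt.comp x ((hasDerivAt_mul_const q).sub_const (y * p))

theorem hasDerivAt_comp_angularMomentum_snd (hc : DifferentiableAt ℝ c (x * q - y * p)) :
    HasDerivAt (fun t => c (x * q - t * p)) (deriv c (x * q - y * p) * -p) y :=
  hc.hasDerivAt.comp y ((hasDerivAt_mul_const p).const_sub (x * q))

end AngularMomentum

theorem poissonBracket_kinetic_add_potential_cubic (V g₁ g₂ : ℝ → ℝ → ℝ)
    (c : ℝ → ℝ → ℝ → ℝ) {x y : ℝ} (k₁ k₂ k₃ k₄ : ℝ)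
    (hc : ∀ p q, c p q (x * q - y * p) = k₁ * p ^ 3 + k₂ * p ^ 2 * q + k₃ * p * q ^ 2 + k₄ * q ^ 3)
    (hg₁ : DifferentiableAt ℝ (fun z : ℝ × ℝ => g₁ z.1 z.2) (x, y))
    (hg₂ : DifferentiableAt ℝ (fun z : ℝ × ℝ => g₂ z.1 z.2) (x, y))
    {p q : ℝ} (hc_diff : DifferentiableAt ℝ (c p q) (x * q - y * p)) :
    poissonBracket (fun x y p q => (p ^ 2 + q ^ 2) / 2 + V x y)
        (fun x y p q => c p q (x * q - y * p) + g₁ x y * p + g₂ x y * q) x y p q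
      = (g₁ x y * deriv (fun t => V t y) x + g₂ x y * deriv (fun t => V x t) y)
        + (3 * k₁ * p ^ 2 + 2 * k₂ * p * q + k₃ * q ^ 2) * deriv (fun t => V t y) x
        + (k₂ * p ^ 2 + 2 * k₃ * p * q + 3 * k₄ * q ^ 2) * deriv (fun t => V x t) y
        - p * (deriv (fun t => g₁ t y) x * p + deriv (fun t => g₂ t y) x * q)
        - q * (deriv (fun t => g₁ x t) y * p + deriv (fun t => g₂ x t) y * q) := by
  have hXp : HasDerivAt (fun t => c t q (x * q - y * t) + g₁ x y * t + g₂ x y * q)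
      (3 * k₁ * p ^ 2 + 2 * k₂ * p * q + k₃ * q ^ 2 + g₁ x y) p := by
    simp only [hc]
    exact (((hasDerivAt_binaryCubic_fst k₁ k₂ k₃ k₄ q p).add
      ((hasDerivAt_id' p).const_mul (g₁ x y))).add_const (g₂ x y * q)).congr_deriv (by ring)
  have hXq : HasDerivAt (fun t => c p t (x * t - y * p) + g₁ x y * p + g₂ x y * t)
      (k₂ * p ^ 2 + 2 * k₃ * p * q + 3 * k₄ * q ^ 2 + g₂ x y) q := by
    simp only [hc]
    exact (((hasDerivAt_binaryCubic_snd k₁ k₂ k₃ k₄ p q).add_const (g₁ x y * p)).add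
      ((hasDerivAt_id' q).const_mul (g₂ x y))).congr_deriv (by ring)
  have hXx : HasDerivAt (fun t => c p q (t * q - y * p) + g₁ t y * p + g₂ t y * q)
      (deriv (c p q) (x * q - y * p) * q + deriv (fun t => g₁ t y) x * p
        + deriv (fun t => g₂ t y) x * q) x := ((hasDerivAt_comp_angularMomentum_fst hc_diff).add
    (hg₁.hasDerivAt_partial_fst.mul_const p)).add (hg₂.hasDerivAt_partial_fst.mul_const q)
  have hXy : HasDerivAt (fun t => c p q (x * q - t * p) + g₁ x t * p + g₂ x t * q)
      (deriv (c p q) (x * q - y * p) * -p + deriv (fun t => g₁ x t) y * p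
        + deriv (fun t => g₂ x t) y * q) y := ((hasDerivAt_comp_angularMomentum_snd hc_diff).add
    (hg₁.hasDerivAt_partial_snd.mul_const p)).add (hg₂.hasDerivAt_partial_snd.mul_const q)
  rw [poissonBracket_kinetic_add_potential, hXp.deriv, hXq.deriv, hXx.deriv, hXy.deriv]
  ring

theorem third_order_integral_sufficiency_general
    (A₃₀₀ A₂₁₀ A₂₀₁ A₁₂₀ A₁₁₁ A₁₀₂ A₀₃₀ A₀₂₁ A₀₁₂ A₀₀₃ : ℝ)
    (f₁ : ℝ → ℝ) (f₂ f₃ : ℝ → ℝ → ℝ) (f₄ : ℝ → ℝ)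
    (hf₁ : ∀ y, f₁ y = -A₃₀₀ * y ^ 3 + A₂₁₀ * y ^ 2 - A₁₂₀ * y + A₀₃₀)
    (hf₂ : ∀ x y, f₂ x y = 3 * A₃₀₀ * x * y ^ 2 - 2 * A₂₁₀ * x * y + A₂₀₁ * y ^ 2
        + A₁₂₀ * x - A₁₁₁ * y + A₀₂₁)
    (hf₃ : ∀ x y, f₃ x y = -3 * A₃₀₀ * x ^ 2 * y + A₂₁₀ * x ^ 2 - 2 * A₂₀₁ * x * y
        + A₁₁₁ * x - A₁₀₂ * y + A₀₁₂)
    (hf₄ : ∀ x, f₄ x = A₃₀₀ * x ^ 3 + A₂₀₁ * x ^ 2 + A₁₀₂ * x + A₀₀₃)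
    (V g₁ g₂ : ℝ → ℝ → ℝ)
    (hg₁ : ContDiff ℝ 1 (fun z : ℝ × ℝ => g₁ z.1 z.2))
    (hg₂ : ContDiff ℝ 1 (fun z : ℝ × ℝ => g₂ z.1 z.2))
    (heq1 : ∀ x y : ℝ,
      g₁ x y * deriv (fun t => V t y) x + g₂ x y * deriv (fun t => V x t) y = 0)
    (heq2 : ∀ x y : ℝ, deriv (fun t => g₁ t y) x
      = 3 * f₁ y * deriv (fun t => V t y) x + f₂ x y * deriv (fun t => V x t) y)
    (heq3 : ∀ x y : ℝ, deriv (fun t => g₂ x t) y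
      = f₃ x y * deriv (fun t => V t y) x + 3 * f₄ x * deriv (fun t => V x t) y)
    (heq4 : ∀ x y : ℝ, deriv (fun t => g₁ x t) y + deriv (fun t => g₂ t y) x
      = 2 * (f₂ x y * deriv (fun t => V t y) x + f₃ x y * deriv (fun t => V x t) y)) :
    ∀ x y p q : ℝ,
      poissonBracket (fun x y p q => (p ^ 2 + q ^ 2) / 2 + V x y)
        (fun x y p q =>
          A₃₀₀ * (x * q - y * p) ^ 3
          + A₂₁₀ * (x * q - y * p) ^ 2 * p
          + A₂₀₁ * (x * q - y * p) ^ 2 * q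
          + A₁₂₀ * (x * q - y * p) * p ^ 2
          + A₁₁₁ * (x * q - y * p) * p * q
          + A₁₀₂ * (x * q - y * p) * q ^ 2
          + A₀₃₀ * p ^ 3 + A₀₂₁ * p ^ 2 * q + A₀₁₂ * p * q ^ 2 + A₀₀₃ * q ^ 3
          + g₁ x y * p + g₂ x y * q) x y p q = 0 := by
  intro x y p q
  let c : ℝ → ℝ → ℝ → ℝ := fun p q L =>
    A₃₀₀ * L ^ 3 + A₂₁₀ * L ^ 2 * p + A₂₀₁ * L ^ 2 * q + A₁₂₀ * L * p ^ 2 + A₁₁₁ * L * p * q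
      + A₁₀₂ * L * q ^ 2 + A₀₃₀ * p ^ 3 + A₀₂₁ * p ^ 2 * q + A₀₁₂ * p * q ^ 2 + A₀₀₃ * q ^ 3
  have hc : ∀ p q, c p q (x * q - y * p)
      = f₁ y * p ^ 3 + f₂ x y * p ^ 2 * q + f₃ x y * p * q ^ 2 + f₄ x * q ^ 3 := by
    intro p q
    simp only [c, hf₁, hf₂, hf₃, hf₄]
    ring
  have hc_diff : DifferentiableAt ℝ (c p q) (x * q - y * p) := by fun_prop
  refine (poissonBracket_kinetic_add_potential_cubic V g₁ g₂ c _ _ _ _ hc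
    (hg₁.differentiable one_ne_zero _) (hg₂.differentiable one_ne_zero _) hc_diff).trans ?_
  linear_combination heq1 x y - p ^ 2 * heq2 x y - q ^ 2 * heq3 x y - p * q * heq4 x y

theorem third_order_integral_sufficiency
    (A₃₀₀ A₂₁₀ A₂₀₁ A₁₂₀ A₁₁₁ A₁₀₂ A₀₃₀ A₀₂₁ A₀₁₂ A₀₀₃ : ℝ)
    (f₁ : ℝ → ℝ) (f₂ f₃ : ℝ → ℝ → ℝ) (f₄ : ℝ → ℝ)
    (hf₁ : ∀ y, f₁ y = -A₃₀₀ * y ^ 3 + A₂₁₀ * y ^ 2 - A₁₂₀ * y + A₀₃₀)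
    (hf₂ : ∀ x y, f₂ x y = 3 * A₃₀₀ * x * y ^ 2 - 2 * A₂₁₀ * x * y + A₂₀₁ * y ^ 2
        + A₁₂₀ * x - A₁₁₁ * y + A₀₂₁)
    (hf₃ : ∀ x y, f₃ x y = -3 * A₃₀₀ * x ^ 2 * y + A₂₁₀ * x ^ 2 - 2 * A₂₀₁ * x * y
        + A₁₁₁ * x - A₁₀₂ * y + A₀₁₂)
    (hf₄ : ∀ x, f₄ x = A₃₀₀ * x ^ 3 + A₂₀₁ * x ^ 2 + A₁₀₂ * x + A₀₀₃)
    (V g₁ g₂ : ℝ → ℝ → ℝ)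
    (hV : ContDiff ℝ 1 (fun z : ℝ × ℝ => V z.1 z.2))
    (hg₁ : ContDiff ℝ 1 (fun z : ℝ × ℝ => g₁ z.1 z.2))
    (hg₂ : ContDiff ℝ 1 (fun z : ℝ × ℝ => g₂ z.1 z.2))
    (heq1 : ∀ x y : ℝ,
      g₁ x y * deriv (fun t => V t y) x + g₂ x y * deriv (fun t => V x t) y = 0)
    (heq2 : ∀ x y : ℝ, deriv (fun t => g₁ t y) x
      = 3 * f₁ y * deriv (fun t => V t y) x + f₂ x y * deriv (fun t => V x t) y)
    (heq3 : ∀ x y : ℝ, deriv (fun t => g₂ x t) y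
      = f₃ x y * deriv (fun t => V t y) x + 3 * f₄ x * deriv (fun t => V x t) y)
    (heq4 : ∀ x y : ℝ, deriv (fun t => g₁ x t) y + deriv (fun t => g₂ t y) x
      = 2 * (f₂ x y * deriv (fun t => V t y) x + f₃ x y * deriv (fun t => V x t) y)) :
    ∀ x y p q : ℝ,
      poissonBracket (fun x y p q => (p ^ 2 + q ^ 2) / 2 + V x y)
        (fun x y p q =>
          A₃₀₀ * (x * q - y * p) ^ 3
          + A₂₁₀ * (x * q - y * p) ^ 2 * p
          + A₂₀₁ * (x * q - y * p) ^ 2 * q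
          + A₁₂₀ * (x * q - y * p) * p ^ 2
          + A₁₁₁ * (x * q - y * p) * p * q
          + A₁₀₂ * (x * q - y * p) * q ^ 2
          + A₀₃₀ * p ^ 3 + A₀₂₁ * p ^ 2 * q + A₀₁₂ * p * q ^ 2 + A₀₀₃ * q ^ 3
          + g₁ x y * p + g₂ x y * q) x y p q = 0 :=
  third_order_integral_sufficiency_general A₃₀₀ A₂₁₀ A₂₀₁ A₁₂₀ A₁₁₁ A₁₀₂ A₀₃₀ A₀₂₁ A₀₁₂ A₀₀₃ f₁ f₂
    f₃ f₄ hf₁ hf₂ hf₃ hf₄ V g₁ g₂ hg₁ hg₂ heq1 heq2 heq3 heq4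
end

section
/- Suppose V : ℝ² → ℝ is C³ and g₁, g₂ : ℝ² → ℝ are C² functions satisfying (g₁)_x = 3f₁V_x + f₂V_y, (g₂)_y = f₃V_x + 3f₄V_y, (g₁)_y + (g₂)_x = 2(f₂V_x + f₃V_y) on ℝ², with f₁,…,f₄ as determined by constants A_{ijk}. Then V satisfies the linear third-order compatibility condition: 0 = -f₃V_{xxx} + (2f₂ - 3f₄)V_{xxy} + (-3f₁ + 2f₃)V_{xyy} - f₂V_{yyy} + 2(f_{2y} - f_{3x})V_{xx} + 2(-3f_{1y} + f_{2x} + f_{3y} - 3f_{4x})V_{xy} + 2(-f_{2y} + f_{3x})V_{yy} + (-3f_{1yy} + 2f_{2xy} - f_{3xx})V_x + (-f_{2yy} + 2f_{3xy} - 3f_{4xx})V_y. -/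
/-!
Writing `P = 3 f₁ V_x + f₂ V_y`, `Q = f₃ V_x + 3 f₄ V_y`, `R = 2 (f₂ V_x + f₃ V_y)`, the equations
say `(g₁)_x = P`, `(g₂)_y = Q`, `(g₁)_y + (g₂)_x = R`. Cross-differentiating with Schwarz's theorem
gives Saint-Venant's compatibility condition `P_yy + Q_xx = R_xy`, and expanding both sides with
Leibniz's rule (and commuting the derivatives of `V`) is exactly the stated third-order condition.
-/

open Function

noncomputable def partialFst (u : ℝ → ℝ → ℝ) : ℝ → ℝ → ℝ := fun x y => deriv (fun t => u t y) x

noncomputable def partialSnd (u : ℝ → ℝ → ℝ) : ℝ → ℝ → ℝ := fun x y => deriv (fun t => u x t) y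

local notation "∂₁" => partialFst
local notation "∂₂" => partialSnd

variable {u w : ℝ → ℝ → ℝ}

theorem hasDerivAt_partialFst {x y : ℝ} (hu : DifferentiableAt ℝ (uncurry u) (x, y)) :
    HasDerivAt (fun t => u t y) (fderiv ℝ (uncurry u) (x, y) (1, 0)) x :=
  (hu.hasFDerivAt.comp_hasDerivAt x ((hasDerivAt_id x).prodMk (hasDerivAt_const x y)) :)

theorem hasDerivAt_partialSnd {x y : ℝ} (hu : DifferentiableAt ℝ (uncurry u) (x, y)) :
    HasDerivAt (fun t => u x t) (fderiv ℝ (uncurry u) (x, y) (0, 1)) y :=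
  (hu.hasFDerivAt.comp_hasDerivAt y ((hasDerivAt_const y x).prodMk (hasDerivAt_id y)) :)

theorem uncurry_partialFst_eq_fderiv (hu : Differentiable ℝ (uncurry u)) :
    uncurry (∂₁ u) = fun z => fderiv ℝ (uncurry u) z (1, 0) :=
  funext fun z => (hasDerivAt_partialFst (hu z)).deriv

theorem uncurry_partialSnd_eq_fderiv (hu : Differentiable ℝ (uncurry u)) :
    uncurry (∂₂ u) = fun z => fderiv ℝ (uncurry u) z (0, 1) :=
  funext fun z => (hasDerivAt_partialSnd (hu z)).deriv

theorem partialFst_add (hu : Differentiable ℝ (uncurry u)) (hw : Differentiable ℝ (uncurry w)) :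
    ∂₁ (u + w) = ∂₁ u + ∂₁ w :=
  funext₂ fun x y => deriv_add (hasDerivAt_partialFst (hu (x, y))).differentiableAt
    (hasDerivAt_partialFst (hw (x, y))).differentiableAt

theorem partialSnd_add (hu : Differentiable ℝ (uncurry u)) (hw : Differentiable ℝ (uncurry w)) :
    ∂₂ (u + w) = ∂₂ u + ∂₂ w :=
  funext₂ fun x y => deriv_add (hasDerivAt_partialSnd (hu (x, y))).differentiableAt
    (hasDerivAt_partialSnd (hw (x, y))).differentiableAt

theorem partialFst_mul (hu : Differentiable ℝ (uncurry u)) (hw : Differentiable ℝ (uncurry w)) :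
    ∂₁ (u * w) = ∂₁ u * w + u * ∂₁ w :=
  funext₂ fun x y => deriv_mul (hasDerivAt_partialFst (hu (x, y))).differentiableAt
    (hasDerivAt_partialFst (hw (x, y))).differentiableAt

theorem partialSnd_mul (hu : Differentiable ℝ (uncurry u)) (hw : Differentiable ℝ (uncurry w)) :
    ∂₂ (u * w) = ∂₂ u * w + u * ∂₂ w :=
  funext₂ fun x y => deriv_mul (hasDerivAt_partialSnd (hu (x, y))).differentiableAt
    (hasDerivAt_partialSnd (hw (x, y))).differentiableAt

theorem partialFst_smul (c : ℝ) (u : ℝ → ℝ → ℝ) : ∂₁ (c • u) = c • ∂₁ u :=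
  funext₂ fun x _ => congrFun (deriv_const_mul_field' c) x

theorem partialSnd_smul (c : ℝ) (u : ℝ → ℝ → ℝ) : ∂₂ (c • u) = c • ∂₂ u :=
  funext₂ fun _ y => congrFun (deriv_const_mul_field' c) y

theorem Differentiable.uncurry_mul (hu : Differentiable ℝ (uncurry u))
    (hw : Differentiable ℝ (uncurry w)) : Differentiable ℝ (uncurry (u * w)) :=
  hu.mul hw

theorem ContDiff.uncurry_mul {n : WithTop ℕ∞} (hu : ContDiff ℝ n (uncurry u))
    (hw : ContDiff ℝ n (uncurry w)) : ContDiff ℝ n (uncurry (u * w)) :=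
  hu.mul hw

theorem ContDiff.uncurry_add {n : WithTop ℕ∞} (hu : ContDiff ℝ n (uncurry u))
    (hw : ContDiff ℝ n (uncurry w)) : ContDiff ℝ n (uncurry (u + w)) :=
  hu.add hw

theorem ContDiff.uncurry_partialFst {m n : WithTop ℕ∞} (hu : ContDiff ℝ n (uncurry u))
    (hmn : m + 1 ≤ n) : ContDiff ℝ m (uncurry (∂₁ u)) := by
  rw [uncurry_partialFst_eq_fderiv (hu.differentiable (ne_bot_of_le_ne_bot one_ne_zero
    (le_add_self.trans hmn)))]
  exact (hu.fderiv_right hmn).clm_apply contDiff_const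

theorem ContDiff.uncurry_partialSnd {m n : WithTop ℕ∞} (hu : ContDiff ℝ n (uncurry u))
    (hmn : m + 1 ≤ n) : ContDiff ℝ m (uncurry (∂₂ u)) := by
  rw [uncurry_partialSnd_eq_fderiv (hu.differentiable (ne_bot_of_le_ne_bot one_ne_zero
    (le_add_self.trans hmn)))]
  exact (hu.fderiv_right hmn).clm_apply contDiff_const

theorem ContDiff.differentiable_uncurry_partialFst (hu : ContDiff ℝ 2 (uncurry u)) :
    Differentiable ℝ (uncurry (∂₁ u)) :=
  (hu.uncurry_partialFst (m := 1) (by norm_num)).differentiable one_ne_zero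

theorem ContDiff.differentiable_uncurry_partialSnd (hu : ContDiff ℝ 2 (uncurry u)) :
    Differentiable ℝ (uncurry (∂₂ u)) :=
  (hu.uncurry_partialSnd (m := 1) (by norm_num)).differentiable one_ne_zero

theorem partialSnd_partialFst_of_differentiable (hu : Differentiable ℝ (uncurry u))
    (hu₁ : Differentiable ℝ (uncurry (∂₁ u))) (hu₂ : Differentiable ℝ (uncurry (∂₂ u))) :
    ∂₂ (∂₁ u) = ∂₁ (∂₂ u) := by
  set f' : ℝ × ℝ → ℝ × ℝ →L[ℝ] ℝ := fun z =>
    uncurry (∂₁ u) z • ContinuousLinearMap.fst ℝ ℝ ℝ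
      + uncurry (∂₂ u) z • ContinuousLinearMap.snd ℝ ℝ ℝ
  have hf' (z : ℝ × ℝ) : HasFDerivAt (uncurry u) (f' z) z := by
    refine (hu z).hasFDerivAt.congr_fderiv (ContinuousLinearMap.ext fun v => ?_)
    have hv : v = v.1 • ((1 : ℝ), (0 : ℝ)) + v.2 • ((0 : ℝ), (1 : ℝ)) := by ext <;> simp
    conv_lhs => rw [hv, map_add, map_smul, map_smul]
    simp [f', uncurry_partialFst_eq_fderiv hu, uncurry_partialSnd_eq_fderiv hu, mul_comm]
  have hf'' : Differentiable ℝ f' := (hu₁.smul_const _).add (hu₂.smul_const _)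
  have hderiv (v w z : ℝ × ℝ) : fderiv ℝ (fun z => f' z v) z w = fderiv ℝ f' z w v := by
    have : HasFDerivAt (fun z => f' z v) _ z :=
      (ContinuousLinearMap.apply ℝ ℝ v).hasFDerivAt.comp z (hf'' z).hasFDerivAt
    rw [this.fderiv]
    rfl
  have h₁ : uncurry (∂₁ u) = fun z => f' z (1, 0) := by funext z; simp [f']
  have h₂ : uncurry (∂₂ u) = fun z => f' z (0, 1) := by funext z; simp [f']
  funext x y
  calc ∂₂ (∂₁ u) x y = fderiv ℝ (fun z => f' z (1, 0)) (x, y) (0, 1) := by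
        rw [← h₁]; exact (hasDerivAt_partialSnd (hu₁ _)).deriv
    _ = fderiv ℝ (fun z => f' z (0, 1)) (x, y) (1, 0) := by
        rw [hderiv, hderiv, second_derivative_symmetric hf' (hf'' (x, y)).hasFDerivAt]
    _ = ∂₁ (∂₂ u) x y := by
        rw [← h₂]; exact (hasDerivAt_partialFst (hu₂ _)).deriv.symm

theorem partialSnd_partialFst (hu : ContDiff ℝ 2 (uncurry u)) : ∂₂ (∂₁ u) = ∂₁ (∂₂ u) :=
  partialSnd_partialFst_of_differentiable (hu.differentiable two_ne_zero)
    hu.differentiable_uncurry_partialFst hu.differentiable_uncurry_partialSnd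

theorem partialFst_partialFst_add (hu : ContDiff ℝ 2 (uncurry u))
    (hw : ContDiff ℝ 2 (uncurry w)) : ∂₁ (∂₁ (u + w)) = ∂₁ (∂₁ u) + ∂₁ (∂₁ w) := by
  rw [partialFst_add (hu.differentiable two_ne_zero) (hw.differentiable two_ne_zero),
    partialFst_add hu.differentiable_uncurry_partialFst hw.differentiable_uncurry_partialFst]

theorem partialSnd_partialSnd_add (hu : ContDiff ℝ 2 (uncurry u))
    (hw : ContDiff ℝ 2 (uncurry w)) : ∂₂ (∂₂ (u + w)) = ∂₂ (∂₂ u) + ∂₂ (∂₂ w) := by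
  rw [partialSnd_add (hu.differentiable two_ne_zero) (hw.differentiable two_ne_zero),
    partialSnd_add hu.differentiable_uncurry_partialSnd hw.differentiable_uncurry_partialSnd]

theorem partialSnd_partialFst_add (hu : ContDiff ℝ 2 (uncurry u))
    (hw : ContDiff ℝ 2 (uncurry w)) : ∂₂ (∂₁ (u + w)) = ∂₂ (∂₁ u) + ∂₂ (∂₁ w) := by
  rw [partialFst_add (hu.differentiable two_ne_zero) (hw.differentiable two_ne_zero),
    partialSnd_add hu.differentiable_uncurry_partialFst hw.differentiable_uncurry_partialFst]

theorem partialFst_partialFst_mul (hu : ContDiff ℝ 2 (uncurry u))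
    (hw : ContDiff ℝ 2 (uncurry w)) :
    ∂₁ (∂₁ (u * w)) = ∂₁ (∂₁ u) * w + 2 * (∂₁ u * ∂₁ w) + u * ∂₁ (∂₁ w) := by
  have hu₀ := hu.differentiable two_ne_zero
  have hw₀ := hw.differentiable two_ne_zero
  have hu₁ := hu.differentiable_uncurry_partialFst
  have hw₁ := hw.differentiable_uncurry_partialFst
  rw [partialFst_mul hu₀ hw₀, partialFst_add (hu₁.uncurry_mul hw₀) (hu₀.uncurry_mul hw₁),
    partialFst_mul hu₁ hw₀, partialFst_mul hu₀ hw₁]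
  ring

theorem partialSnd_partialSnd_mul (hu : ContDiff ℝ 2 (uncurry u))
    (hw : ContDiff ℝ 2 (uncurry w)) :
    ∂₂ (∂₂ (u * w)) = ∂₂ (∂₂ u) * w + 2 * (∂₂ u * ∂₂ w) + u * ∂₂ (∂₂ w) := by
  have hu₀ := hu.differentiable two_ne_zero
  have hw₀ := hw.differentiable two_ne_zero
  have hu₂ := hu.differentiable_uncurry_partialSnd
  have hw₂ := hw.differentiable_uncurry_partialSnd
  rw [partialSnd_mul hu₀ hw₀, partialSnd_add (hu₂.uncurry_mul hw₀) (hu₀.uncurry_mul hw₂),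
    partialSnd_mul hu₂ hw₀, partialSnd_mul hu₀ hw₂]
  ring

theorem partialSnd_partialFst_mul (hu : ContDiff ℝ 2 (uncurry u))
    (hw : ContDiff ℝ 2 (uncurry w)) :
    ∂₂ (∂₁ (u * w)) = ∂₂ (∂₁ u) * w + ∂₁ u * ∂₂ w + ∂₂ u * ∂₁ w + u * ∂₂ (∂₁ w) := by
  have hu₀ := hu.differentiable two_ne_zero
  have hw₀ := hw.differentiable two_ne_zero
  have hu₁ := hu.differentiable_uncurry_partialFst
  have hw₁ := hw.differentiable_uncurry_partialFst
  rw [partialFst_mul hu₀ hw₀, partialSnd_add (hu₁.uncurry_mul hw₀) (hu₀.uncurry_mul hw₁),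
    partialSnd_mul hu₁ hw₀, partialSnd_mul hu₀ hw₁]
  ring

/-- The equations say that `(g₁, g₂)` is a displacement field with strain `(P, R / 2, Q)`. -/
theorem saintVenant_compatibility {g₁ g₂ P Q R : ℝ → ℝ → ℝ}
    (hg₁ : ContDiff ℝ 2 (uncurry g₁)) (hg₂ : ContDiff ℝ 2 (uncurry g₂))
    (hP : ContDiff ℝ 2 (uncurry P)) (hQ : ContDiff ℝ 2 (uncurry Q))
    (hR : ContDiff ℝ 2 (uncurry R))
    (h₁ : ∂₁ g₁ = P) (h₂ : ∂₂ g₂ = Q) (h₃ : ∂₂ g₁ + ∂₁ g₂ = R) :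
    ∂₂ (∂₂ P) + ∂₁ (∂₁ Q) = ∂₂ (∂₁ R) := by
  have hPg₁ : ∂₁ (∂₂ g₁) = ∂₂ P := by rw [← h₁, partialSnd_partialFst hg₁]
  have hQg₂ : ∂₂ (∂₁ g₂) = ∂₁ Q := by rw [← h₂, partialSnd_partialFst hg₂]
  have hRg₂ : ∂₁ R = ∂₂ P + ∂₁ (∂₁ g₂) := by
    rw [← h₃, partialFst_add hg₁.differentiable_uncurry_partialSnd
      hg₂.differentiable_uncurry_partialFst, hPg₁]
  have hP₂ : Differentiable ℝ (uncurry (∂₂ P)) := hP.differentiable_uncurry_partialSnd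
  -- `g₂` is only `C²`, but both partials of `∂₁ g₂` are differentiable, which is all Schwarz needs.
  have hg₂₁₁ : Differentiable ℝ (uncurry (∂₁ (∂₁ g₂))) := by
    rw [eq_sub_of_add_eq' hRg₂.symm]
    exact hR.differentiable_uncurry_partialFst.sub hP₂
  have hg₂₁₂ : Differentiable ℝ (uncurry (∂₂ (∂₁ g₂))) := by
    rw [hQg₂]
    exact hQ.differentiable_uncurry_partialFst
  rw [hRg₂, partialSnd_add hP₂ hg₂₁₁, partialSnd_partialFst_of_differentiable
    hg₂.differentiable_uncurry_partialFst hg₂₁₁ hg₂₁₂, hQg₂]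

theorem linear_compatibility_condition_of_contDiff {F₁ F₂ F₃ F₄ V g₁ g₂ : ℝ → ℝ → ℝ}
    (hF₁ : ContDiff ℝ 2 (uncurry F₁)) (hF₂ : ContDiff ℝ 2 (uncurry F₂))
    (hF₃ : ContDiff ℝ 2 (uncurry F₃)) (hF₄ : ContDiff ℝ 2 (uncurry F₄))
    (hV : ContDiff ℝ 3 (uncurry V))
    (hg₁ : ContDiff ℝ 2 (uncurry g₁)) (hg₂ : ContDiff ℝ 2 (uncurry g₂))
    (h₁ : ∀ x y, ∂₁ g₁ x y = 3 * F₁ x y * ∂₁ V x y + F₂ x y * ∂₂ V x y)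
    (h₂ : ∀ x y, ∂₂ g₂ x y = F₃ x y * ∂₁ V x y + 3 * F₄ x y * ∂₂ V x y)
    (h₃ : ∀ x y, ∂₂ g₁ x y + ∂₁ g₂ x y = 2 * (F₂ x y * ∂₁ V x y + F₃ x y * ∂₂ V x y))
    (x y : ℝ) :
    0 = -F₃ x y * ∂₁ (∂₁ (∂₁ V)) x y + (2 * F₂ x y - 3 * F₄ x y) * ∂₂ (∂₁ (∂₁ V)) x y
      + (-3 * F₁ x y + 2 * F₃ x y) * ∂₂ (∂₂ (∂₁ V)) x y - F₂ x y * ∂₂ (∂₂ (∂₂ V)) x y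
      + 2 * (∂₂ F₂ x y - ∂₁ F₃ x y) * ∂₁ (∂₁ V) x y
      + 2 * (-3 * ∂₂ F₁ x y + ∂₁ F₂ x y + ∂₂ F₃ x y - 3 * ∂₁ F₄ x y) * ∂₂ (∂₁ V) x y
      + 2 * (-∂₂ F₂ x y + ∂₁ F₃ x y) * ∂₂ (∂₂ V) x y
      + (-3 * ∂₂ (∂₂ F₁) x y + 2 * ∂₂ (∂₁ F₂) x y - ∂₁ (∂₁ F₃) x y) * ∂₁ V x y
      + (-∂₂ (∂₂ F₂) x y + 2 * ∂₂ (∂₁ F₃) x y - 3 * ∂₁ (∂₁ F₄) x y) * ∂₂ V x y := by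
  have hV₁ : ContDiff ℝ 2 (uncurry (∂₁ V)) := hV.uncurry_partialFst (by norm_num)
  have hV₂ : ContDiff ℝ 2 (uncurry (∂₂ V)) := hV.uncurry_partialSnd (by norm_num)
  have h3F₁ : ContDiff ℝ 2 (uncurry ((3 : ℝ) • F₁)) := hF₁.const_smul (3 : ℝ)
  have h3F₄ : ContDiff ℝ 2 (uncurry ((3 : ℝ) • F₄)) := hF₄.const_smul (3 : ℝ)
  have h2F₂ : ContDiff ℝ 2 (uncurry ((2 : ℝ) • F₂)) := hF₂.const_smul (2 : ℝ)
  have h2F₃ : ContDiff ℝ 2 (uncurry ((2 : ℝ) • F₃)) := hF₃.const_smul (2 : ℝ)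
  have hP : ∂₁ g₁ = (3 : ℝ) • F₁ * ∂₁ V + F₂ * ∂₂ V := funext₂ fun x y => by
    simp only [Pi.add_apply, Pi.mul_apply, Pi.smul_apply, smul_eq_mul, h₁]
  have hQ : ∂₂ g₂ = F₃ * ∂₁ V + (3 : ℝ) • F₄ * ∂₂ V := funext₂ fun x y => by
    simp only [Pi.add_apply, Pi.mul_apply, Pi.smul_apply, smul_eq_mul, h₂]
  have hR : ∂₂ g₁ + ∂₁ g₂ = (2 : ℝ) • F₂ * ∂₁ V + (2 : ℝ) • F₃ * ∂₂ V := funext₂ fun x y => by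
    simp only [Pi.add_apply, Pi.mul_apply, Pi.smul_apply, smul_eq_mul, h₃]
    ring
  have key := congrFun₂ (saintVenant_compatibility hg₁ hg₂
    ((h3F₁.uncurry_mul hV₁).uncurry_add (hF₂.uncurry_mul hV₂))
    ((hF₃.uncurry_mul hV₁).uncurry_add (h3F₄.uncurry_mul hV₂))
    ((h2F₂.uncurry_mul hV₁).uncurry_add (h2F₃.uncurry_mul hV₂)) hP hQ hR) x y
  rw [partialSnd_partialSnd_add (h3F₁.uncurry_mul hV₁) (hF₂.uncurry_mul hV₂),
    partialSnd_partialSnd_mul h3F₁ hV₁, partialSnd_partialSnd_mul hF₂ hV₂,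
    partialFst_partialFst_add (hF₃.uncurry_mul hV₁) (h3F₄.uncurry_mul hV₂),
    partialFst_partialFst_mul hF₃ hV₁, partialFst_partialFst_mul h3F₄ hV₂,
    partialSnd_partialFst_add (h2F₂.uncurry_mul hV₁) (h2F₃.uncurry_mul hV₂),
    partialSnd_partialFst_mul h2F₂ hV₁, partialSnd_partialFst_mul h2F₃ hV₂,
    ← partialSnd_partialFst (hV.of_le (by norm_num)), ← partialSnd_partialFst hV₁] at key
  simp only [partialFst_smul, partialSnd_smul, Pi.add_apply, Pi.mul_apply, Pi.smul_apply,
    smul_eq_mul, Pi.ofNat_apply] at key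
  linear_combination key

theorem linear_compatibility_condition
    (A₃₀₀ A₂₁₀ A₂₀₁ A₁₂₀ A₁₁₁ A₁₀₂ A₀₃₀ A₀₂₁ A₀₁₂ A₀₀₃ : ℝ)
    (f₁ : ℝ → ℝ) (f₂ f₃ : ℝ → ℝ → ℝ) (f₄ : ℝ → ℝ)
    (hf₁ : ∀ y, f₁ y = -A₃₀₀ * y ^ 3 + A₂₁₀ * y ^ 2 - A₁₂₀ * y + A₀₃₀)
    (hf₂ : ∀ x y, f₂ x y = 3 * A₃₀₀ * x * y ^ 2 - 2 * A₂₁₀ * x * y + A₂₀₁ * y ^ 2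
        + A₁₂₀ * x - A₁₁₁ * y + A₀₂₁)
    (hf₃ : ∀ x y, f₃ x y = -3 * A₃₀₀ * x ^ 2 * y + A₂₁₀ * x ^ 2 - 2 * A₂₀₁ * x * y
        + A₁₁₁ * x - A₁₀₂ * y + A₀₁₂)
    (hf₄ : ∀ x, f₄ x = A₃₀₀ * x ^ 3 + A₂₀₁ * x ^ 2 + A₁₀₂ * x + A₀₀₃)
    (V g₁ g₂ : ℝ → ℝ → ℝ)
    (hV : ContDiff ℝ 3 (fun z : ℝ × ℝ => V z.1 z.2))
    (hg₁ : ContDiff ℝ 2 (fun z : ℝ × ℝ => g₁ z.1 z.2))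
    (hg₂ : ContDiff ℝ 2 (fun z : ℝ × ℝ => g₂ z.1 z.2))
    (heq2 : ∀ x y : ℝ, deriv (fun t => g₁ t y) x
      = 3 * f₁ y * deriv (fun t => V t y) x + f₂ x y * deriv (fun t => V x t) y)
    (heq3 : ∀ x y : ℝ, deriv (fun t => g₂ x t) y
      = f₃ x y * deriv (fun t => V t y) x + 3 * f₄ x * deriv (fun t => V x t) y)
    (heq4 : ∀ x y : ℝ, deriv (fun t => g₁ x t) y + deriv (fun t => g₂ t y) x
      = 2 * (f₂ x y * deriv (fun t => V t y) x + f₃ x y * deriv (fun t => V x t) y)) :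
    ∀ x y : ℝ,
      0 = -f₃ x y * deriv (fun a => deriv (fun b => deriv (fun c => V c y) b) a) x
        + (2 * f₂ x y - 3 * f₄ x)
          * deriv (fun a => deriv (fun b => deriv (fun c => V c a) b) x) y
        + (-3 * f₁ y + 2 * f₃ x y)
          * deriv (fun a => deriv (fun b => deriv (fun c => V c b) x) a) y
        - f₂ x y * deriv (fun a => deriv (fun b => deriv (fun c => V x c) b) a) y
        + 2 * (deriv (fun t => f₂ x t) y - deriv (fun t => f₃ t y) x)
          * deriv (fun t => deriv (fun u => V u y) t) x
        + 2 * (-3 * deriv f₁ y + deriv (fun t => f₂ t y) x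
            + deriv (fun t => f₃ x t) y - 3 * deriv f₄ x)
          * deriv (fun t => deriv (fun u => V u t) x) y
        + 2 * (-(deriv (fun t => f₂ x t) y) + deriv (fun t => f₃ t y) x)
          * deriv (fun t => deriv (fun u => V x u) t) y
        + (-3 * deriv (deriv f₁) y + 2 * deriv (fun s => deriv (fun t => f₂ t s) x) y
            - deriv (fun t => deriv (fun u => f₃ u y) t) x)
          * deriv (fun t => V t y) x
        + (-(deriv (fun t => deriv (fun u => f₂ x u) t) y)
            + 2 * deriv (fun s => deriv (fun t => f₃ t s) x) y - 3 * deriv (deriv f₄) x)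
          * deriv (fun t => V x t) y := by
  have hF₁ : ContDiff ℝ 2 fun z : ℝ × ℝ => f₁ z.2 := by simp only [hf₁]; fun_prop
  have hF₂ : ContDiff ℝ 2 fun z : ℝ × ℝ => f₂ z.1 z.2 := by simp only [hf₂]; fun_prop
  have hF₃ : ContDiff ℝ 2 fun z : ℝ × ℝ => f₃ z.1 z.2 := by simp only [hf₃]; fun_prop
  have hF₄ : ContDiff ℝ 2 fun z : ℝ × ℝ => f₄ z.1 := by simp only [hf₄]; fun_prop
  exact linear_compatibility_condition_of_contDiff (F₁ := fun _ y => f₁ y) (F₄ := fun x _ => f₄ x)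
    hF₁ hF₂ hF₃ hF₄ hV hg₁ hg₂ heq2 heq3 heq4
end
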